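/- For every partition λ and positive integer k, Σ_{P ∈ RPP(λ,k)} Σ_{i=1}^{k} jag(α(P,i)) = 2·|BSSYT(λ,k)|, where jag(μ) denotes the jaggedness of a subshape μ of λ. -/
import Mathlib


open Polynomial

/-- The set of cells of the Young diagram of the partition with parts
`lam 1 ≥ lam 2 ≥ … ≥ lam r`, i.e. pairs `(i,j)` with `1 ≤ i ≤ r` and `1 ≤ j ≤ lam i`. -/
def cells (lam : ℕ → ℕ) (r : ℕ) : Set (ℕ × ℕ) :=
  {p | 1 ≤ p.1 ∧ p.1 ≤ r ∧ 1 ≤ p.2 ∧ p.2 ≤ lam p.1}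

/-- `lam` restricted to indices `1,…,r` is a partition with `r` (positive) parts. -/
def IsPartition (lam : ℕ → ℕ) (r : ℕ) : Prop :=
  (∀ i, 1 ≤ i → i + 1 ≤ r → lam (i + 1) ≤ lam i) ∧ (∀ i, 1 ≤ i → i ≤ r → 1 ≤ lam i)

/-- A partition with `r` rows and `c = lam 1` columns is balanced if every outward corner
of its southeast boundary lies on the main anti-diagonal:
whenever `1 ≤ i < r` and `lam (i+1) < lam i`, one has `lam 1 * (r - i) = r * lam (i+1)`. -/
def IsBalanced (lam : ℕ → ℕ) (r : ℕ) : Prop :=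
  ∀ i, 1 ≤ i → i < r → lam (i + 1) < lam i → lam 1 * (r - i) = r * lam (i + 1)

/-- Flagged semistandard Young tableaux of shape `lam` (with `r` rows):
positive entries, weakly increasing along rows, strictly increasing down columns,
entries in row `i` at most `k + i`; entries outside the diagram are normalized to `0`. -/
def SYT (lam : ℕ → ℕ) (r k : ℕ) : Set ((ℕ × ℕ) → ℕ) :=
  {T | (∀ p, p ∉ cells lam r → T p = 0) ∧
       (∀ p ∈ cells lam r, 1 ≤ T p ∧ T p ≤ k + p.1) ∧
       (∀ i j, (i, j) ∈ cells lam r → (i, j + 1) ∈ cells lam r → T (i, j) ≤ T (i, j + 1)) ∧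
       (∀ i j, (i, j) ∈ cells lam r → (i + 1, j) ∈ cells lam r → T (i, j) < T (i + 1, j))}

/-- Flagged barely set-valued semistandard Young tableaux of shape `lam` (with `r` rows):
finite nonempty sets of positive integers in each cell, exactly one cell receiving a
two-element set and all other cells singletons, weakly increasing along rows
(`A ≤ B` iff every element of `A` is at most every element of `B`) and strictly
increasing down columns, every entry in row `i` at most `k + i`;
cells outside the diagram are normalized to `∅`. -/
def BSSYT (lam : ℕ → ℕ) (r k : ℕ) : Set ((ℕ × ℕ) → Finset ℕ) :=
  {T | (∀ p, p ∉ cells lam r → T p = ∅) ∧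
       (∃ B ∈ cells lam r, (T B).card = 2 ∧ ∀ p ∈ cells lam r, p ≠ B → (T p).card = 1) ∧
       (∀ p ∈ cells lam r, ∀ x ∈ T p, 1 ≤ x ∧ x ≤ k + p.1) ∧
       (∀ i j, (i, j) ∈ cells lam r → (i, j + 1) ∈ cells lam r →
          ∀ x ∈ T (i, j), ∀ y ∈ T (i, j + 1), x ≤ y) ∧
       (∀ i j, (i, j) ∈ cells lam r → (i + 1, j) ∈ cells lam r →
          ∀ x ∈ T (i, j), ∀ y ∈ T (i + 1, j), x < y)}

/-- Reverse plane partitions of shape `lam` (with `r` rows) with entries in `{0,…,k}`: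
weakly increasing along rows and down columns; entries outside the diagram normalized to `0`. -/
def RPP (lam : ℕ → ℕ) (r k : ℕ) : Set ((ℕ × ℕ) → ℕ) :=
  {P | (∀ p, p ∉ cells lam r → P p = 0) ∧
       (∀ p ∈ cells lam r, P p ≤ k) ∧
       (∀ i j, (i, j) ∈ cells lam r → (i, j + 1) ∈ cells lam r → P (i, j) ≤ P (i, j + 1)) ∧
       (∀ i j, (i, j) ∈ cells lam r → (i + 1, j) ∈ cells lam r → P (i, j) ≤ P (i + 1, j))}

/-- A subshape of `lam`: a down-closed subset of the cells of `lam`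
(i.e. a Young diagram contained in `lam`). -/
def IsSubshape (lam : ℕ → ℕ) (r : ℕ) (μ : Set (ℕ × ℕ)) : Prop :=
  μ ⊆ cells lam r ∧
  ∀ p ∈ μ, ∀ q : ℕ × ℕ, 1 ≤ q.1 → q.1 ≤ p.1 → 1 ≤ q.2 → q.2 ≤ p.2 → q ∈ μ

/-- The induced subshape `α(P,i)`: cells of `lam` whose entry in `P` is strictly less than `i`. -/
def alphaShape (lam : ℕ → ℕ) (r : ℕ) (P : (ℕ × ℕ) → ℕ) (i : ℕ) : Set (ℕ × ℕ) :=
  {p | p ∈ cells lam r ∧ P p < i}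

/-- A corner of a subshape `μ`: a cell of `μ` such that the cells immediately below
and to the right are not in `μ`. -/
def IsShapeCorner (μ : Set (ℕ × ℕ)) (p : ℕ × ℕ) : Prop :=
  p ∈ μ ∧ (p.1 + 1, p.2) ∉ μ ∧ (p.1, p.2 + 1) ∉ μ

/-- A proper outside corner of a subshape `μ` of `lam`: a cell of `lam` not in `μ` whose
upper neighbour is in `μ` (or which lies in the first row) and whose left neighbour is
in `μ` (or which lies in the first column). -/
def IsProperOutsideCorner (lam : ℕ → ℕ) (r : ℕ) (μ : Set (ℕ × ℕ)) (p : ℕ × ℕ) : Prop :=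
  p ∈ cells lam r ∧ p ∉ μ ∧
  ((p.1 - 1, p.2) ∈ μ ∨ p.1 = 1) ∧ ((p.1, p.2 - 1) ∈ μ ∨ p.2 = 1)

/-- The jaggedness of a subshape `μ` of `lam`: the number of corners of `μ` plus the
number of proper outside corners of `μ`. -/
noncomputable def jag (lam : ℕ → ℕ) (r : ℕ) (μ : Set (ℕ × ℕ)) : ℕ :=
  {p | IsShapeCorner μ p}.ncard + {p | IsProperOutsideCorner lam r μ p}.ncard

/-- `p` can be toggled into the subshape `μ`. -/
def ToggleIn (lam : ℕ → ℕ) (r : ℕ) (μ : Set (ℕ × ℕ)) (p : ℕ × ℕ) : Prop :=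
  p ∉ μ ∧ IsSubshape lam r (insert p μ)

/-- `p` can be toggled out of the subshape `μ`. -/
def ToggleOut (lam : ℕ → ℕ) (r : ℕ) (μ : Set (ℕ × ℕ)) (p : ℕ × ℕ) : Prop :=
  p ∈ μ ∧ IsSubshape lam r (μ \ {p})

/-- The `j`-th part of the rectangular staircase partition `δ_d(b^a)`,
namely `b * (d - ⌈j/a⌉)`. -/
def deltaSC (a b d : ℕ) : ℕ → ℕ := fun j => b * (d - (j + a - 1) / a)

section Aux

variable {lam : ℕ → ℕ} {r k : ℕ}

lemma mem_cells_iff (p : ℕ × ℕ) :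
    p ∈ cells lam r ↔ 1 ≤ p.1 ∧ p.1 ≤ r ∧ 1 ≤ p.2 ∧ p.2 ≤ lam p.1 := Iff.rfl

lemma lam_anti (hpart : IsPartition lam r) :
    ∀ a b : ℕ, 1 ≤ a → a ≤ b → b ≤ r → lam b ≤ lam a := by
  intro a b ha hab hbr
  induction b with
  | zero => omega
  | succ n ih =>
    rcases Nat.eq_or_lt_of_le hab with h | h
    · rw [h]
    · exact le_trans (hpart.1 n (by omega) (by omega)) (ih (by omega) (by omega))

lemma cells_down (hpart : IsPartition lam r) {a b : ℕ} (h : (a, b) ∈ cells lam r)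
    {a' b' : ℕ} (ha1 : 1 ≤ a') (ha : a' ≤ a) (hb1 : 1 ≤ b') (hb : b' ≤ b) :
    (a', b') ∈ cells lam r := by
  obtain ⟨h1, h2, h3, h4⟩ := h
  exact ⟨ha1, by omega, hb1, le_trans (by omega) (le_trans h4 (lam_anti hpart a' a ha1 ha h2))⟩

end Aux
section Aux2

variable {lam : ℕ → ℕ} {r k : ℕ}

/-- A Finset whose coe is `cells lam r`. -/
noncomputable def cellsF (lam : ℕ → ℕ) (r : ℕ) : Finset (ℕ × ℕ) :=
  (Finset.Icc 1 r ×ˢ Finset.Icc 1 ((Finset.Icc 1 r).sup lam)).filter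
    (fun p => p.2 ≤ lam p.1)

lemma coe_cellsF : (cellsF lam r : Set (ℕ × ℕ)) = cells lam r := by
  ext p
  simp only [cellsF, Finset.coe_filter, Set.mem_setOf_eq, Finset.mem_product,
    Finset.mem_Icc, mem_cells_iff]
  constructor
  · rintro ⟨⟨⟨h1, h2⟩, h3, _⟩, h5⟩; exact ⟨h1, h2, h3, h5⟩
  · rintro ⟨h1, h2, h3, h4⟩
    refine ⟨⟨⟨h1, h2⟩, h3, le_trans h4 ?_⟩, h4⟩
    exact Finset.le_sup (Finset.mem_Icc.2 ⟨h1, h2⟩)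

/-- Generic finiteness for sets of functions supported on `cells` with finitely many
possible values. -/
lemma finite_funs {β : Type*} (d : β) (G : Set β) (hG : G.Finite)
    (S : Set ((ℕ × ℕ) → β))
    (h1 : ∀ f ∈ S, ∀ p, p ∉ cells lam r → f p = d)
    (h2 : ∀ f ∈ S, ∀ p, p ∈ cells lam r → f p ∈ G) : S.Finite := by
  have hcfin : (cells lam r).Finite := by
    rw [← coe_cellsF]; exact (cellsF lam r).finite_toSet
  have : Finite (cells lam r) := hcfin
  have himg : (fun f : (ℕ × ℕ) → β => fun c : cells lam r => f c) '' S ⊆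
      Set.pi Set.univ (fun _ : cells lam r => G) := by
    rintro g ⟨f, hf, rfl⟩ c _
    exact h2 f hf c c.2
  have hfin2 : ((fun f : (ℕ × ℕ) → β => fun c : cells lam r => f c) '' S).Finite :=
    (Set.Finite.pi (fun _ => hG)).subset himg
  refine Set.Finite.of_finite_image hfin2 ?_
  intro f hf f' hf' h
  funext p
  by_cases hp : p ∈ cells lam r
  · exact congrFun h ⟨p, hp⟩
  · rw [h1 f hf p hp, h1 f' hf' p hp]

lemma RPP_finite (lam : ℕ → ℕ) (r k : ℕ) : (RPP lam r k).Finite := by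
  refine finite_funs 0 (Set.Iic k) (Set.finite_Iic k) _ (fun f hf => hf.1) ?_
  exact fun f hf p hp => hf.2.1 p hp

end Aux2
section Aux3

variable {lam : ℕ → ℕ} {r k : ℕ}

lemma BSSYT_nonempty {T : (ℕ × ℕ) → Finset ℕ} (hT : T ∈ BSSYT lam r k)
    {p : ℕ × ℕ} (hp : p ∈ cells lam r) : (T p).Nonempty := by
  obtain ⟨B, hB, hB2, hone⟩ := hT.2.1
  rcases eq_or_ne p B with rfl | hne
  · exact Finset.card_pos.1 (by omega)
  · exact Finset.card_pos.1 (by rw [hone p hp hne]; omega)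

lemma BSSYT_row_le {T : (ℕ × ℕ) → Finset ℕ} (hT : T ∈ BSSYT lam r k)
    (hpart : IsPartition lam r) :
    ∀ a b : ℕ, (a, b) ∈ cells lam r → ∀ x ∈ T (a, b), a ≤ x := by
  intro a
  induction a with
  | zero => intro b hb; exact absurd hb.1 (by omega)
  | succ n ih =>
    intro b hb x hx
    rcases Nat.eq_zero_or_pos n with rfl | hn
    · exact (hT.2.2.1 _ hb x hx).1
    · have hup : (n, b) ∈ cells lam r := cells_down hpart hb (by omega) (by omega) hb.2.2.1 le_rfl
      obtain ⟨z, hz⟩ := BSSYT_nonempty hT hup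
      have := hT.2.2.2.2 n b hup hb z hz x hx
      have := ih b hup z hz
      omega

end Aux3
section Aux4

open Classical in
/-- Forward map for outside corners. -/
noncomputable def PhiOut (lam : ℕ → ℕ) (r : ℕ) (P : (ℕ × ℕ) → ℕ) (i0 : ℕ) (c : ℕ × ℕ) :
    (ℕ × ℕ) → Finset ℕ :=
  fun p => if p ∈ cells lam r then
    (if p = c then {i0 - 1 + c.1, P c + c.1} else {P p + p.1}) else ∅

open Classical in
/-- Forward map for corners. -/
noncomputable def PhiCor (lam : ℕ → ℕ) (r : ℕ) (P : (ℕ × ℕ) → ℕ) (i0 : ℕ) (c : ℕ × ℕ) :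
    (ℕ × ℕ) → Finset ℕ :=
  fun p => if p ∈ cells lam r then
    (if p = c then {P c + c.1, i0 + c.1} else {P p + p.1}) else ∅

variable {lam : ℕ → ℕ} {r k : ℕ} {P : (ℕ × ℕ) → ℕ} {i0 : ℕ} {c : ℕ × ℕ}

lemma mem_alpha_iff (p : ℕ × ℕ) :
    p ∈ alphaShape lam r P i0 ↔ p ∈ cells lam r ∧ P p < i0 := Iff.rfl

lemma PhiOut_mem (hP : P ∈ RPP lam r k) (hi1 : 1 ≤ i0) (hik : i0 ≤ k)
    (hc : IsProperOutsideCorner lam r (alphaShape lam r P i0) c) :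
    PhiOut lam r P i0 c ∈ BSSYT lam r k := by
  obtain ⟨hcc, hcna, hcu, hcl⟩ := hc
  have hge : i0 ≤ P c := by
    by_contra h
    exact hcna ⟨hcc, by omega⟩
  have hc1 : 1 ≤ c.1 := hcc.1
  refine ⟨?_, ⟨c, hcc, ?_, ?_⟩, ?_, ?_, ?_⟩
  · intro p hp; simp [PhiOut, hp]
  · simp only [PhiOut, if_pos hcc, if_pos rfl]
    exact Finset.card_pair (by omega)
  · intro p hp hne; simp [PhiOut, hp, hne]
  · intro p hp x hx
    simp only [PhiOut, if_pos hp] at hx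
    rcases eq_or_ne p c with rfl | hne
    · rw [if_pos rfl] at hx
      simp only [Finset.mem_insert, Finset.mem_singleton] at hx
      have := hP.2.1 p hp
      rcases hx with rfl | rfl <;> constructor <;> omega
    · rw [if_neg hne] at hx
      simp only [Finset.mem_singleton] at hx
      have := hP.2.1 p hp
      have := hp.1
      subst hx; constructor <;> omega
  · intro i j h1 h2 x hx y hy
    simp only [PhiOut, if_pos h1] at hx
    simp only [PhiOut, if_pos h2] at hy
    have hrow := hP.2.2.1 i j h1 h2
    by_cases e1 : (i, j) = c
    · rw [if_pos e1] at hx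
      have e2 : (i, j + 1) ≠ c := by rw [← e1]; simp
      rw [if_neg e2] at hy
      simp only [Finset.mem_insert, Finset.mem_singleton] at hx hy
      have hc1' : c.1 = i := by rw [← e1]
      have hpc : P c = P (i, j) := by rw [e1]
      subst hy
      rcases hx with rfl | rfl <;> omega
    · rw [if_neg e1] at hx
      simp only [Finset.mem_singleton] at hx
      by_cases e2 : (i, j + 1) = c
      · rw [if_pos e2] at hy
        simp only [Finset.mem_insert, Finset.mem_singleton] at hy
        have hj1 : 1 ≤ j := h1.2.2.1
        have hlt : P (i, j) < i0 := by
          rcases hcl with h | h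
          · rw [← e2] at h
            simpa using (mem_alpha_iff _).1 (by simpa using h) |>.2
          · rw [← e2] at h; omega
        have hc1' : c.1 = i := by rw [← e2]
        have hpc : P c = P (i, j + 1) := by rw [e2]
        subst hx
        rcases hy with rfl | rfl <;> omega
      · rw [if_neg e2] at hy
        simp only [Finset.mem_singleton] at hy
        omega
  · intro i j h1 h2 x hx y hy
    simp only [PhiOut, if_pos h1] at hx
    simp only [PhiOut, if_pos h2] at hy
    have hcol := hP.2.2.2 i j h1 h2
    by_cases e1 : (i, j) = c
    · rw [if_pos e1] at hx
      have e2 : (i + 1, j) ≠ c := by rw [← e1]; simp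
      rw [if_neg e2] at hy
      simp only [Finset.mem_insert, Finset.mem_singleton] at hx hy
      have hc1' : c.1 = i := by rw [← e1]
      have hpc : P c = P (i, j) := by rw [e1]
      subst hy
      rcases hx with rfl | rfl <;> omega
    · rw [if_neg e1] at hx
      simp only [Finset.mem_singleton] at hx
      by_cases e2 : (i + 1, j) = c
      · rw [if_pos e2] at hy
        simp only [Finset.mem_insert, Finset.mem_singleton] at hy
        have hi1' : 1 ≤ i := h1.1
        have hlt : P (i, j) < i0 := by
          rcases hcu with h | h
          · rw [← e2] at h
            simpa using (mem_alpha_iff _).1 (by simpa using h) |>.2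
          · rw [← e2] at h; omega
        have hc1' : c.1 = i + 1 := by rw [← e2]
        have hpc : P c = P (i + 1, j) := by rw [e2]
        subst hx
        rcases hy with rfl | rfl <;> omega
      · rw [if_neg e2] at hy
        simp only [Finset.mem_singleton] at hy
        omega

end Aux4
section Aux5

variable {lam : ℕ → ℕ} {r k : ℕ} {P : (ℕ × ℕ) → ℕ} {i0 : ℕ} {c : ℕ × ℕ}

lemma PhiCor_mem (hP : P ∈ RPP lam r k) (hi1 : 1 ≤ i0) (hik : i0 ≤ k)
    (hc : IsShapeCorner (alphaShape lam r P i0) c) :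
    PhiCor lam r P i0 c ∈ BSSYT lam r k := by
  obtain ⟨⟨hcc, hlt⟩, hcd, hcr⟩ := hc
  have hc1 : 1 ≤ c.1 := hcc.1
  refine ⟨?_, ⟨c, hcc, ?_, ?_⟩, ?_, ?_, ?_⟩
  · intro p hp; simp [PhiCor, hp]
  · simp only [PhiCor, if_pos hcc, if_pos rfl]
    exact Finset.card_pair (by omega)
  · intro p hp hne; simp [PhiCor, hp, hne]
  · intro p hp x hx
    simp only [PhiCor, if_pos hp] at hx
    rcases eq_or_ne p c with rfl | hne
    · rw [if_pos rfl] at hx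
      simp only [Finset.mem_insert, Finset.mem_singleton] at hx
      have := hP.2.1 p hp
      rcases hx with rfl | rfl <;> constructor <;> omega
    · rw [if_neg hne] at hx
      simp only [Finset.mem_singleton] at hx
      have := hP.2.1 p hp
      have := hp.1
      subst hx; constructor <;> omega
  · intro i j h1 h2 x hx y hy
    simp only [PhiCor, if_pos h1] at hx
    simp only [PhiCor, if_pos h2] at hy
    have hrow := hP.2.2.1 i j h1 h2
    by_cases e1 : (i, j) = c
    · rw [if_pos e1] at hx
      have e2 : (i, j + 1) ≠ c := by rw [← e1]; simp
      rw [if_neg e2] at hy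
      simp only [Finset.mem_insert, Finset.mem_singleton] at hx hy
      have hge : i0 ≤ P (i, j + 1) := by
        by_contra h
        exact hcr (by rw [← e1]; exact ⟨h2, show P (i, j + 1) < i0 by omega⟩)
      have hc1' : c.1 = i := by rw [← e1]
      have hpc : P c = P (i, j) := by rw [e1]
      subst hy
      rcases hx with rfl | rfl <;> omega
    · rw [if_neg e1] at hx
      simp only [Finset.mem_singleton] at hx
      by_cases e2 : (i, j + 1) = c
      · rw [if_pos e2] at hy
        simp only [Finset.mem_insert, Finset.mem_singleton] at hy
        have hc1' : c.1 = i := by rw [← e2]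
        have hpc : P c = P (i, j + 1) := by rw [e2]
        subst hx
        rcases hy with rfl | rfl <;> omega
      · rw [if_neg e2] at hy
        simp only [Finset.mem_singleton] at hy
        omega
  · intro i j h1 h2 x hx y hy
    simp only [PhiCor, if_pos h1] at hx
    simp only [PhiCor, if_pos h2] at hy
    have hcol := hP.2.2.2 i j h1 h2
    by_cases e1 : (i, j) = c
    · rw [if_pos e1] at hx
      have e2 : (i + 1, j) ≠ c := by rw [← e1]; simp
      rw [if_neg e2] at hy
      simp only [Finset.mem_insert, Finset.mem_singleton] at hx hy
      have hge : i0 ≤ P (i + 1, j) := by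
        by_contra h
        exact hcd (by rw [← e1]; exact ⟨h2, show P (i + 1, j) < i0 by omega⟩)
      have hc1' : c.1 = i := by rw [← e1]
      have hpc : P c = P (i, j) := by rw [e1]
      subst hy
      rcases hx with rfl | rfl <;> omega
    · rw [if_neg e1] at hx
      simp only [Finset.mem_singleton] at hx
      by_cases e2 : (i + 1, j) = c
      · rw [if_pos e2] at hy
        simp only [Finset.mem_insert, Finset.mem_singleton] at hy
        have hc1' : c.1 = i + 1 := by rw [← e2]
        have hpc : P c = P (i + 1, j) := by rw [e2]
        subst hx
        rcases hy with rfl | rfl <;> omega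
      · rw [if_neg e2] at hy
        simp only [Finset.mem_singleton] at hy
        omega

end Aux5
section Aux6

variable {lam : ℕ → ℕ} {r k : ℕ} {P P' : (ℕ × ℕ) → ℕ} {i0 i0' : ℕ} {c c' : ℕ × ℕ}

lemma PhiOut_inj (hP : P ∈ RPP lam r k) (hP' : P' ∈ RPP lam r k)
    (hi1 : 1 ≤ i0) (hi1' : 1 ≤ i0')
    (hc : IsProperOutsideCorner lam r (alphaShape lam r P i0) c)
    (hc' : IsProperOutsideCorner lam r (alphaShape lam r P' i0') c')
    (h : PhiOut lam r P i0 c = PhiOut lam r P' i0' c') :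
    P = P' ∧ i0 = i0' ∧ c = c' := by
  have hcc : c ∈ cells lam r := hc.1
  have hcc' : c' ∈ cells lam r := hc'.1
  have hge : i0 ≤ P c := by
    by_contra hcon; exact hc.2.1 ⟨hcc, by omega⟩
  have hge' : i0' ≤ P' c' := by
    by_contra hcon; exact hc'.2.1 ⟨hcc', by omega⟩
  have hccc : c = c' := by
    by_contra hne
    have := congrFun h c
    simp only [PhiOut, if_pos hcc, if_pos rfl, if_true, if_neg hne] at this
    have h2 : ({i0 - 1 + c.1, P c + c.1} : Finset ℕ).card = 2 :=
      Finset.card_pair (by have := hcc.1; omega)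
    rw [this] at h2
    simp at h2
  subst hccc
  have hset := congrFun h c
  simp only [PhiOut, if_pos hcc, if_pos rfl, if_true] at hset
  have h1 : i0 - 1 + c.1 ∈ ({i0' - 1 + c.1, P' c + c.1} : Finset ℕ) := by
    rw [← hset]; simp
  have h2 : P c + c.1 ∈ ({i0' - 1 + c.1, P' c + c.1} : Finset ℕ) := by
    rw [← hset]; simp
  have h3 : i0' - 1 + c.1 ∈ ({i0 - 1 + c.1, P c + c.1} : Finset ℕ) := by
    rw [hset]; simp
  have h4 : P' c + c.1 ∈ ({i0 - 1 + c.1, P c + c.1} : Finset ℕ) := by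
    rw [hset]; simp
  simp only [Finset.mem_insert, Finset.mem_singleton] at h1 h2 h3 h4
  have hii : i0 = i0' ∧ P c = P' c := by omega
  refine ⟨funext fun p => ?_, hii.1, rfl⟩
  by_cases hp : p ∈ cells lam r
  · rcases eq_or_ne p c with rfl | hne
    · exact hii.2
    · have := congrFun h p
      simp only [PhiOut, if_pos hp, if_neg hne] at this
      simpa using this
  · rw [hP.1 p hp, hP'.1 p hp]

lemma PhiCor_inj (hP : P ∈ RPP lam r k) (hP' : P' ∈ RPP lam r k)
    (hc : IsShapeCorner (alphaShape lam r P i0) c)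
    (hc' : IsShapeCorner (alphaShape lam r P' i0') c')
    (h : PhiCor lam r P i0 c = PhiCor lam r P' i0' c') :
    P = P' ∧ i0 = i0' ∧ c = c' := by
  have hcc : c ∈ cells lam r := hc.1.1
  have hcc' : c' ∈ cells lam r := hc'.1.1
  have hge : P c < i0 := hc.1.2
  have hge' : P' c' < i0' := hc'.1.2
  have hccc : c = c' := by
    by_contra hne
    have := congrFun h c
    simp only [PhiCor, if_pos hcc, if_pos rfl, if_true, if_neg hne] at this
    have h2 : ({P c + c.1, i0 + c.1} : Finset ℕ).card = 2 :=
      Finset.card_pair (by omega)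
    rw [this] at h2
    simp at h2
  subst hccc
  have hset := congrFun h c
  simp only [PhiCor, if_pos hcc, if_pos rfl, if_true] at hset
  have h1 : P c + c.1 ∈ ({P' c + c.1, i0' + c.1} : Finset ℕ) := by
    rw [← hset]; simp
  have h2 : i0 + c.1 ∈ ({P' c + c.1, i0' + c.1} : Finset ℕ) := by
    rw [← hset]; simp
  have h3 : P' c + c.1 ∈ ({P c + c.1, i0 + c.1} : Finset ℕ) := by
    rw [hset]; simp
  have h4 : i0' + c.1 ∈ ({P c + c.1, i0 + c.1} : Finset ℕ) := by
    rw [hset]; simp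
  simp only [Finset.mem_insert, Finset.mem_singleton] at h1 h2 h3 h4
  have hii : i0 = i0' ∧ P c = P' c := by omega
  refine ⟨funext fun p => ?_, hii.1, rfl⟩
  by_cases hp : p ∈ cells lam r
  · rcases eq_or_ne p c with rfl | hne
    · exact hii.2
    · have := congrFun h p
      simp only [PhiCor, if_pos hp, if_neg hne] at this
      simpa using this
  · rw [hP.1 p hp, hP'.1 p hp]

end Aux6
section Aux7

variable {lam : ℕ → ℕ} {r k : ℕ}

lemma PhiOut_surj (hpart : IsPartition lam r) {T : (ℕ × ℕ) → Finset ℕ}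
    (hT : T ∈ BSSYT lam r k) :
    ∃ P i0 c, P ∈ RPP lam r k ∧ 1 ≤ i0 ∧ i0 ≤ k ∧
      IsProperOutsideCorner lam r (alphaShape lam r P i0) c ∧
      PhiOut lam r P i0 c = T := by
  classical
  obtain ⟨B, hB, hB2, hone⟩ := hT.2.1
  have hne : ∀ p, p ∈ cells lam r → (T p).Nonempty := fun p hp => BSSYT_nonempty hT hp
  set P : (ℕ × ℕ) → ℕ := fun p =>
    if hp : p ∈ cells lam r then (T p).max' (hne p hp) - p.1 else 0 with hPdef
  -- basic facts
  have hrowb : ∀ p ∈ cells lam r, ∀ x ∈ T p, p.1 ≤ x := by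
    intro p hp x hx
    exact BSSYT_row_le hT hpart p.1 p.2 (by simpa using hp) x (by simpa using hx)
  have hmaxmem : ∀ p (hp : p ∈ cells lam r), (T p).max' (hne p hp) ∈ T p :=
    fun p hp => Finset.max'_mem _ _
  have hPval : ∀ p (hp : p ∈ cells lam r), P p = (T p).max' (hne p hp) - p.1 := by
    intro p hp; simp [hPdef, hp]
  have hminB : (T B).min' (hne B hB) ∈ T B := Finset.min'_mem _ _
  have hminlt : (T B).min' (hne B hB) < (T B).max' (hne B hB) :=
    Finset.min'_lt_max'_of_card _ (by omega)
  have hBrow : B.1 ≤ (T B).min' (hne B hB) := hrowb B hB _ hminB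
  have hmaxbd : ∀ p (hp : p ∈ cells lam r), (T p).max' (hne p hp) ≤ k + p.1 :=
    fun p hp => (hT.2.2.1 p hp _ (hmaxmem p hp)).2
  set i0 : ℕ := (T B).min' (hne B hB) + 1 - B.1 with hi0def
  -- P is an RPP
  have hPmem : P ∈ RPP lam r k := by
    refine ⟨fun p hp => by simp [hPdef, hp], ?_, ?_, ?_⟩
    · intro p hp
      rw [hPval p hp]
      have := hmaxbd p hp
      omega
    · intro i j h1 h2
      rw [hPval _ h1, hPval _ h2]
      have hle := hT.2.2.2.1 i j h1 h2 _ (hmaxmem _ h1) _ (hmaxmem _ h2)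
      have := hrowb _ h1 _ (hmaxmem _ h1)
      omega
    · intro i j h1 h2
      rw [hPval _ h1, hPval _ h2]
      have hle := hT.2.2.2.2 i j h1 h2 _ (hmaxmem _ h1) _ (hmaxmem _ h2)
      have := hrowb _ h1 _ (hmaxmem _ h1)
      have := hrowb _ h2 _ (hmaxmem _ h2)
      omega
  have hi01 : 1 ≤ i0 := by
    have := hBrow; simp only [hi0def]; omega
  have hi0k : i0 ≤ k := by
    have h1 := hmaxbd B hB
    simp only [hi0def]
    omega
  have hPB : P B = (T B).max' (hne B hB) - B.1 := hPval B hB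
  have hcorner : IsProperOutsideCorner lam r (alphaShape lam r P i0) B := by
    refine ⟨hB, ?_, ?_, ?_⟩
    · rintro ⟨-, hlt⟩
      rw [hPB] at hlt
      simp only [hi0def] at hlt
      omega
    · rcases Nat.eq_or_lt_of_le hB.1 with h | h
      · exact Or.inr h.symm
      · left
        have hBeq : B.1 - 1 + 1 = B.1 := by omega
        have hup : (B.1 - 1, B.2) ∈ cells lam r :=
          cells_down hpart (show (B.1, B.2) ∈ cells lam r by simpa using hB)
            (by omega) (by omega) hB.2.2.1 le_rfl
        have hpe : ((B.1 - 1 + 1, B.2) : ℕ × ℕ) = B := by rw [hBeq]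
        have hB' : ((B.1 - 1 + 1, B.2) : ℕ × ℕ) ∈ cells lam r := by rw [hpe]; exact hB
        have hcol := hT.2.2.2.2 (B.1 - 1) B.2 hup hB' _ (hmaxmem _ hup)
          ((T B).min' (hne B hB)) (by rw [hpe]; exact hminB)
        refine ⟨hup, ?_⟩
        rw [hPval _ hup]
        have e1 : ((B.1 - 1, B.2) : ℕ × ℕ).1 = B.1 - 1 := rfl
        rw [e1]
        have hr : B.1 - 1 ≤ (T (B.1 - 1, B.2)).max' (hne _ hup) :=
          hrowb _ hup _ (hmaxmem _ hup)
        simp only [hi0def]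
        omega
    · rcases Nat.eq_or_lt_of_le hB.2.2.1 with h | h
      · exact Or.inr h.symm
      · left
        have hBeq : B.2 - 1 + 1 = B.2 := by omega
        have hleft : (B.1, B.2 - 1) ∈ cells lam r :=
          cells_down hpart (show (B.1, B.2) ∈ cells lam r by simpa using hB)
            hB.1 le_rfl (by omega) (by omega)
        have hpe : ((B.1, B.2 - 1 + 1) : ℕ × ℕ) = B := by rw [hBeq]
        have hB' : ((B.1, B.2 - 1 + 1) : ℕ × ℕ) ∈ cells lam r := by rw [hpe]; exact hB
        have hrow := hT.2.2.2.1 B.1 (B.2 - 1) hleft hB' _ (hmaxmem _ hleft)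
          ((T B).min' (hne B hB)) (by rw [hpe]; exact hminB)
        refine ⟨hleft, ?_⟩
        rw [hPval _ hleft]
        show (T (B.1, B.2 - 1)).max' (hne (B.1, B.2 - 1) hleft) - B.1 < i0
        have hr : B.1 ≤ (T (B.1, B.2 - 1)).max' (hne _ hleft) :=
          hrowb _ hleft _ (hmaxmem _ hleft)
        simp only [hi0def]
        omega
  refine ⟨P, i0, B, hPmem, hi01, hi0k, hcorner, ?_⟩
  funext p
  by_cases hp : p ∈ cells lam r
  · rcases eq_or_ne p B with rfl | hpne
    · simp only [PhiOut, if_pos hp, if_pos rfl]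
      -- T p = {min', max'}
      obtain ⟨x, y, hxy, hTxy⟩ := Finset.card_eq_two.1 hB2
      rcases Nat.lt_or_ge x y with hlt | hge
      · have hmax : (T p).max' (hne p hp) = y := by
          apply le_antisymm
          · apply Finset.max'_le; intro z hz
            rw [hTxy] at hz
            simp only [Finset.mem_insert, Finset.mem_singleton] at hz
            rcases hz with rfl | rfl <;> omega
          · apply Finset.le_max'; rw [hTxy]; simp
        have hmin : (T p).min' (hne p hp) = x := by
          apply le_antisymm
          · apply Finset.min'_le; rw [hTxy]; simp
          · apply Finset.le_min'; intro z hz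
            rw [hTxy] at hz
            simp only [Finset.mem_insert, Finset.mem_singleton] at hz
            rcases hz with rfl | rfl <;> omega
        have hBr : p.1 ≤ x := by rw [← hmin]; exact hBrow
        have h1 : i0 - 1 + p.1 = x := by simp only [hi0def, ← hmin]; omega
        have h2 : P p + p.1 = y := by rw [hPB]; omega
        rw [h1, h2]
        exact hTxy.symm
      · -- y < x symmetric
        have hlt : y < x := by omega
        have hmax : (T p).max' (hne p hp) = x := by
          apply le_antisymm
          · apply Finset.max'_le; intro z hz
            rw [hTxy] at hz
            simp only [Finset.mem_insert, Finset.mem_singleton] at hz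
            rcases hz with rfl | rfl <;> omega
          · apply Finset.le_max'; rw [hTxy]; simp
        have hmin : (T p).min' (hne p hp) = y := by
          apply le_antisymm
          · apply Finset.min'_le; rw [hTxy]; simp
          · apply Finset.le_min'; intro z hz
            rw [hTxy] at hz
            simp only [Finset.mem_insert, Finset.mem_singleton] at hz
            rcases hz with rfl | rfl <;> omega
        have hBr : p.1 ≤ y := by rw [← hmin]; exact hBrow
        have h1 : i0 - 1 + p.1 = y := by simp only [hi0def, ← hmin]; omega
        have h2 : P p + p.1 = x := by rw [hPB]; omega
        rw [h1, h2]
        rw [hTxy]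
        exact Finset.pair_comm y x
    · simp only [PhiOut, if_pos hp, if_neg hpne]
      obtain ⟨x, hx⟩ := Finset.card_eq_one.1 (hone p hp hpne)
      have hxm : x ∈ T p := by rw [hx]; simp
      have hmax : (T p).max' (hne p hp) = x := by
        apply le_antisymm
        · apply Finset.max'_le
          intro z hz
          rw [hx] at hz
          simp only [Finset.mem_singleton] at hz
          omega
        · exact Finset.le_max' _ _ hxm
      have hple : p.1 ≤ x := hrowb p hp x hxm
      have h2 : P p + p.1 = x := by rw [hPval p hp]; omega
      rw [h2]
      exact hx.symm
  · simp only [PhiOut, if_neg hp]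
    exact (hT.1 p hp).symm

end Aux7
section Aux8

variable {lam : ℕ → ℕ} {r k : ℕ}

lemma PhiCor_surj (hpart : IsPartition lam r) {T : (ℕ × ℕ) → Finset ℕ}
    (hT : T ∈ BSSYT lam r k) :
    ∃ P i0 c, P ∈ RPP lam r k ∧ 1 ≤ i0 ∧ i0 ≤ k ∧
      IsShapeCorner (alphaShape lam r P i0) c ∧
      PhiCor lam r P i0 c = T := by
  classical
  obtain ⟨B, hB, hB2, hone⟩ := hT.2.1
  have hne : ∀ p, p ∈ cells lam r → (T p).Nonempty := fun p hp => BSSYT_nonempty hT hp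
  set P : (ℕ × ℕ) → ℕ := fun p =>
    if hp : p ∈ cells lam r then (T p).min' (hne p hp) - p.1 else 0 with hPdef
  have hrowb : ∀ p ∈ cells lam r, ∀ x ∈ T p, p.1 ≤ x := by
    intro p hp x hx
    exact BSSYT_row_le hT hpart p.1 p.2 (by simpa using hp) x (by simpa using hx)
  have hminmem : ∀ p (hp : p ∈ cells lam r), (T p).min' (hne p hp) ∈ T p :=
    fun p hp => Finset.min'_mem _ _
  have hPval : ∀ p (hp : p ∈ cells lam r), P p = (T p).min' (hne p hp) - p.1 := by
    intro p hp; simp [hPdef, hp]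
  have hmaxB : (T B).max' (hne B hB) ∈ T B := Finset.max'_mem _ _
  have hminlt : (T B).min' (hne B hB) < (T B).max' (hne B hB) :=
    Finset.min'_lt_max'_of_card _ (by omega)
  have hBrow : B.1 ≤ (T B).min' (hne B hB) := hrowb B hB _ (hminmem B hB)
  have hminbd : ∀ p (hp : p ∈ cells lam r), (T p).min' (hne p hp) ≤ k + p.1 :=
    fun p hp => (hT.2.2.1 p hp _ (hminmem p hp)).2
  have hmaxbd : (T B).max' (hne B hB) ≤ k + B.1 := (hT.2.2.1 B hB _ hmaxB).2
  set i0 : ℕ := (T B).max' (hne B hB) - B.1 with hi0def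
  have hPmem : P ∈ RPP lam r k := by
    refine ⟨fun p hp => by simp [hPdef, hp], ?_, ?_, ?_⟩
    · intro p hp
      rw [hPval p hp]
      have := hminbd p hp
      omega
    · intro i j h1 h2
      rw [hPval _ h1, hPval _ h2]
      have hle := hT.2.2.2.1 i j h1 h2 _ (hminmem _ h1) _ (hminmem _ h2)
      have := hrowb _ h1 _ (hminmem _ h1)
      omega
    · intro i j h1 h2
      rw [hPval _ h1, hPval _ h2]
      have hle := hT.2.2.2.2 i j h1 h2 _ (hminmem _ h1) _ (hminmem _ h2)
      have := hrowb _ h1 _ (hminmem _ h1)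
      have := hrowb _ h2 _ (hminmem _ h2)
      omega
  have hi01 : 1 ≤ i0 := by
    simp only [hi0def]
    omega
  have hi0k : i0 ≤ k := by
    simp only [hi0def]
    omega
  have hPB : P B = (T B).min' (hne B hB) - B.1 := hPval B hB
  have hcorner : IsShapeCorner (alphaShape lam r P i0) B := by
    refine ⟨⟨hB, ?_⟩, ?_, ?_⟩
    · rw [hPB]
      simp only [hi0def]
      omega
    · -- (B.1 + 1, B.2) not in alpha
      rintro ⟨hc, hlt⟩
      have hrw : P (B.1 + 1, B.2) = (T (B.1 + 1, B.2)).min' (hne _ hc) - (B.1 + 1, B.2).1 :=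
        hPval _ hc
      rw [hrw] at hlt
      have hBm : (B.1, B.2) ∈ cells lam r := by simpa using hB
      have hcol := hT.2.2.2.2 B.1 B.2 hBm (by exact hc)
        ((T B).max' (hne B hB)) (by simpa using hmaxB)
        _ (hminmem _ hc)
      have hr : (B.1 + 1, B.2).1 ≤ (T (B.1 + 1, B.2)).min' (hne _ hc) :=
        hrowb _ hc _ (hminmem _ hc)
      have e1 : ((B.1 + 1, B.2) : ℕ × ℕ).1 = B.1 + 1 := rfl
      rw [e1] at hlt hr
      simp only [hi0def] at hlt
      omega
    · -- (B.1, B.2 + 1) not in alpha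
      rintro ⟨hc, hlt⟩
      have hrw : P (B.1, B.2 + 1) = (T (B.1, B.2 + 1)).min' (hne _ hc) - (B.1, B.2 + 1).1 :=
        hPval _ hc
      rw [hrw] at hlt
      have hBm : (B.1, B.2) ∈ cells lam r := by simpa using hB
      have hrow := hT.2.2.2.1 B.1 B.2 hBm (by exact hc)
        ((T B).max' (hne B hB)) (by simpa using hmaxB)
        _ (hminmem _ hc)
      have hr : (B.1, B.2 + 1).1 ≤ (T (B.1, B.2 + 1)).min' (hne _ hc) :=
        hrowb _ hc _ (hminmem _ hc)
      have e1 : ((B.1, B.2 + 1) : ℕ × ℕ).1 = B.1 := rfl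
      simp only [hi0def] at hlt
      omega
  refine ⟨P, i0, B, hPmem, hi01, hi0k, hcorner, ?_⟩
  funext p
  by_cases hp : p ∈ cells lam r
  · rcases eq_or_ne p B with rfl | hpne
    · simp only [PhiCor, if_pos hp, if_pos rfl]
      obtain ⟨x, y, hxy, hTxy⟩ := Finset.card_eq_two.1 hB2
      have hxm : x ∈ T p := by rw [hTxy]; simp
      have hym : y ∈ T p := by rw [hTxy]; simp
      rcases Nat.lt_or_ge x y with hlt | hge
      · have hmax : (T p).max' (hne p hp) = y := by
          apply le_antisymm
          · apply Finset.max'_le; intro z hz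
            rw [hTxy] at hz
            simp only [Finset.mem_insert, Finset.mem_singleton] at hz
            rcases hz with rfl | rfl <;> omega
          · exact Finset.le_max' _ _ hym
        have hmin : (T p).min' (hne p hp) = x := by
          apply le_antisymm
          · exact Finset.min'_le _ _ hxm
          · apply Finset.le_min'; intro z hz
            rw [hTxy] at hz
            simp only [Finset.mem_insert, Finset.mem_singleton] at hz
            rcases hz with rfl | rfl <;> omega
        have hBr : p.1 ≤ x := by rw [← hmin]; exact hBrow
        have h1 : P p + p.1 = x := by rw [hPB]; omega
        have h2 : i0 + p.1 = y := by simp only [hi0def, ← hmax]; omega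
        rw [h1, h2]
        exact hTxy.symm
      · have hlt : y < x := by omega
        have hmax : (T p).max' (hne p hp) = x := by
          apply le_antisymm
          · apply Finset.max'_le; intro z hz
            rw [hTxy] at hz
            simp only [Finset.mem_insert, Finset.mem_singleton] at hz
            rcases hz with rfl | rfl <;> omega
          · exact Finset.le_max' _ _ hxm
        have hmin : (T p).min' (hne p hp) = y := by
          apply le_antisymm
          · exact Finset.min'_le _ _ hym
          · apply Finset.le_min'; intro z hz
            rw [hTxy] at hz
            simp only [Finset.mem_insert, Finset.mem_singleton] at hz
            rcases hz with rfl | rfl <;> omega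
        have hBr : p.1 ≤ y := by rw [← hmin]; exact hBrow
        have h1 : P p + p.1 = y := by rw [hPB]; omega
        have h2 : i0 + p.1 = x := by simp only [hi0def, ← hmax]; omega
        rw [h1, h2]
        rw [hTxy]
        exact Finset.pair_comm y x
    · simp only [PhiCor, if_pos hp, if_neg hpne]
      obtain ⟨x, hx⟩ := Finset.card_eq_one.1 (hone p hp hpne)
      have hxm : x ∈ T p := by rw [hx]; simp
      have hmin : (T p).min' (hne p hp) = x := by
        apply le_antisymm
        · exact Finset.min'_le _ _ hxm
        · apply Finset.le_min'
          intro z hz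
          rw [hx] at hz
          simp only [Finset.mem_singleton] at hz
          omega
      have hple : p.1 ≤ x := hrowb p hp x hxm
      have h2 : P p + p.1 = x := by rw [hPval p hp]; omega
      rw [h2]
      exact hx.symm
  · simp only [PhiCor, if_neg hp]
    exact (hT.1 p hp).symm

end Aux8
/-- `Σ_{P ∈ RPP(λ,k)} Σ_{i=1}^k jag(α(P,i)) = 2 · |BSSYT(λ,k)|`. -/
theorem total_jaggedness_eq_two_BSSYT (lam : ℕ → ℕ) (r k : ℕ)
    (hpart : IsPartition lam r) (hk : 1 ≤ k) :
    (∑ᶠ P ∈ RPP lam r k, ∑ i ∈ Finset.Icc 1 k, jag lam r (alphaShape lam r P i))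
      = 2 * (BSSYT lam r k).ncard := by
  classical
  have hfin := RPP_finite lam r k
  set A : Finset ((ℕ × ℕ) → ℕ) := hfin.toFinset with hA
  have hAco : (A : Set ((ℕ × ℕ) → ℕ)) = RPP lam r k := hfin.coe_toFinset
  have hmemA : ∀ P, P ∈ A ↔ P ∈ RPP lam r k := by
    intro P; rw [← hAco]; exact Iff.rfl
  have hmemF : ∀ c, c ∈ cellsF lam r ↔ c ∈ cells lam r := by
    intro c
    constructor
    · intro h; rw [← coe_cellsF]; exact h
    · intro h; rw [← coe_cellsF] at h; exact h
  -- convert finsum to finset sum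
  rw [← hAco, finsum_mem_coe_finset]
  -- the two triple sets
  set SC : Set (((ℕ × ℕ) → ℕ) × ℕ × (ℕ × ℕ)) :=
    {t | t.1 ∈ RPP lam r k ∧ 1 ≤ t.2.1 ∧ t.2.1 ≤ k ∧
      IsShapeCorner (alphaShape lam r t.1 t.2.1) t.2.2} with hSC
  set SO : Set (((ℕ × ℕ) → ℕ) × ℕ × (ℕ × ℕ)) :=
    {t | t.1 ∈ RPP lam r k ∧ 1 ≤ t.2.1 ∧ t.2.1 ≤ k ∧
      IsProperOutsideCorner lam r (alphaShape lam r t.1 t.2.1) t.2.2} with hSO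
  -- corner/outside corner sets as finsets
  have hcorset : ∀ (P : (ℕ × ℕ) → ℕ) (i : ℕ),
      {c | IsShapeCorner (alphaShape lam r P i) c}.ncard
        = ((cellsF lam r).filter (fun c => IsShapeCorner (alphaShape lam r P i) c)).card := by
    intro P i
    rw [← Set.ncard_coe_finset]
    congr 1
    ext c
    simp only [Finset.coe_filter, Set.mem_setOf_eq, Finset.mem_coe]
    constructor
    · intro h
      exact ⟨(hmemF c).2 h.1.1, h⟩
    · rintro ⟨hc, h⟩; exact h
  have houtset : ∀ (P : (ℕ × ℕ) → ℕ) (i : ℕ),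
      {c | IsProperOutsideCorner lam r (alphaShape lam r P i) c}.ncard
        = ((cellsF lam r).filter
            (fun c => IsProperOutsideCorner lam r (alphaShape lam r P i) c)).card := by
    intro P i
    rw [← Set.ncard_coe_finset]
    congr 1
    ext c
    simp only [Finset.coe_filter, Set.mem_setOf_eq, Finset.mem_coe]
    constructor
    · intro h
      exact ⟨(hmemF c).2 h.1, h⟩
    · rintro ⟨hc, h⟩; exact h
  -- card of SC
  have hSCcard : SC.ncard
      = ∑ P ∈ A, ∑ i ∈ Finset.Icc 1 k,
          ((cellsF lam r).filter (fun c => IsShapeCorner (alphaShape lam r P i) c)).card := by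
    have hset : SC = ↑((A ×ˢ (Finset.Icc 1 k ×ˢ cellsF lam r)).filter
        (fun t => IsShapeCorner (alphaShape lam r t.1 t.2.1) t.2.2)) := by
      ext t
      simp only [hSC, Set.mem_setOf_eq, Finset.coe_filter, Finset.mem_product,
        Finset.mem_Icc, Finset.mem_coe]
      constructor
      · rintro ⟨h1, h2, h3, h4⟩
        exact ⟨⟨(hmemA _).2 h1, ⟨h2, h3⟩, (hmemF _).2 h4.1.1⟩, h4⟩
      · rintro ⟨⟨h1, ⟨h2, h3⟩, _⟩, h4⟩
        exact ⟨(hmemA _).1 h1, h2, h3, h4⟩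
    rw [hset, Set.ncard_coe_finset, Finset.card_filter, Finset.sum_product]
    refine Finset.sum_congr rfl fun P _ => ?_
    rw [Finset.sum_product]
    refine Finset.sum_congr rfl fun i _ => ?_
    rw [Finset.card_filter]
  have hSOcard : SO.ncard
      = ∑ P ∈ A, ∑ i ∈ Finset.Icc 1 k,
          ((cellsF lam r).filter
            (fun c => IsProperOutsideCorner lam r (alphaShape lam r P i) c)).card := by
    have hset : SO = ↑((A ×ˢ (Finset.Icc 1 k ×ˢ cellsF lam r)).filter
        (fun t => IsProperOutsideCorner lam r (alphaShape lam r t.1 t.2.1) t.2.2)) := by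
      ext t
      simp only [hSO, Set.mem_setOf_eq, Finset.coe_filter, Finset.mem_product,
        Finset.mem_Icc, Finset.mem_coe]
      constructor
      · rintro ⟨h1, h2, h3, h4⟩
        exact ⟨⟨(hmemA _).2 h1, ⟨h2, h3⟩, (hmemF _).2 h4.1⟩, h4⟩
      · rintro ⟨⟨h1, ⟨h2, h3⟩, _⟩, h4⟩
        exact ⟨(hmemA _).1 h1, h2, h3, h4⟩
    rw [hset, Set.ncard_coe_finset, Finset.card_filter, Finset.sum_product]
    refine Finset.sum_congr rfl fun P _ => ?_
    rw [Finset.sum_product]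
    refine Finset.sum_congr rfl fun i _ => ?_
    rw [Finset.card_filter]
  -- bijections
  have hSCbij : SC.ncard = (BSSYT lam r k).ncard := by
    have himg : (fun t : ((ℕ × ℕ) → ℕ) × ℕ × (ℕ × ℕ) =>
        PhiCor lam r t.1 t.2.1 t.2.2) '' SC = BSSYT lam r k := by
      ext T
      constructor
      · rintro ⟨⟨P, i, c⟩, ⟨h1, h2, h3, h4⟩, rfl⟩
        exact PhiCor_mem h1 h2 h3 h4
      · intro hT
        obtain ⟨P, i0, c, hP, hi1, hik, hc, heq⟩ := PhiCor_surj hpart hT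
        exact ⟨(P, i0, c), ⟨hP, hi1, hik, hc⟩, heq⟩
    have hinj : Set.InjOn (fun t : ((ℕ × ℕ) → ℕ) × ℕ × (ℕ × ℕ) =>
        PhiCor lam r t.1 t.2.1 t.2.2) SC := by
      rintro ⟨P, i, c⟩ ⟨h1, h2, h3, h4⟩ ⟨P', i', c'⟩ ⟨h1', h2', h3', h4'⟩ h
      obtain ⟨e1, e2, e3⟩ := PhiCor_inj h1 h1' h4 h4' h
      simp only [Prod.mk.injEq]
      exact ⟨e1, e2, e3⟩
    rw [← himg, Set.ncard_image_of_injOn hinj]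
  have hSObij : SO.ncard = (BSSYT lam r k).ncard := by
    have himg : (fun t : ((ℕ × ℕ) → ℕ) × ℕ × (ℕ × ℕ) =>
        PhiOut lam r t.1 t.2.1 t.2.2) '' SO = BSSYT lam r k := by
      ext T
      constructor
      · rintro ⟨⟨P, i, c⟩, ⟨h1, h2, h3, h4⟩, rfl⟩
        exact PhiOut_mem h1 h2 h3 h4
      · intro hT
        obtain ⟨P, i0, c, hP, hi1, hik, hc, heq⟩ := PhiOut_surj hpart hT
        exact ⟨(P, i0, c), ⟨hP, hi1, hik, hc⟩, heq⟩
    have hinj : Set.InjOn (fun t : ((ℕ × ℕ) → ℕ) × ℕ × (ℕ × ℕ) =>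
        PhiOut lam r t.1 t.2.1 t.2.2) SO := by
      rintro ⟨P, i, c⟩ ⟨h1, h2, h3, h4⟩ ⟨P', i', c'⟩ ⟨h1', h2', h3', h4'⟩ h
      obtain ⟨e1, e2, e3⟩ := PhiOut_inj h1 h1' h2 h2' h4 h4' h
      simp only [Prod.mk.injEq]
      exact ⟨e1, e2, e3⟩
    rw [← himg, Set.ncard_image_of_injOn hinj]
  -- assemble
  have hjag : ∀ P ∈ A, ∑ i ∈ Finset.Icc 1 k, jag lam r (alphaShape lam r P i)
      = (∑ i ∈ Finset.Icc 1 k,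
          ((cellsF lam r).filter (fun c => IsShapeCorner (alphaShape lam r P i) c)).card)
        + ∑ i ∈ Finset.Icc 1 k,
          ((cellsF lam r).filter
            (fun c => IsProperOutsideCorner lam r (alphaShape lam r P i) c)).card := by
    intro P _
    rw [← Finset.sum_add_distrib]
    refine Finset.sum_congr rfl fun i _ => ?_
    rw [jag, hcorset P i, houtset P i]
  calc ∑ P ∈ A, ∑ i ∈ Finset.Icc 1 k, jag lam r (alphaShape lam r P i)
      = ∑ P ∈ A, ((∑ i ∈ Finset.Icc 1 k,
          ((cellsF lam r).filter (fun c => IsShapeCorner (alphaShape lam r P i) c)).card)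
        + ∑ i ∈ Finset.Icc 1 k,
          ((cellsF lam r).filter
            (fun c => IsProperOutsideCorner lam r (alphaShape lam r P i) c)).card) :=
        Finset.sum_congr rfl hjag
    _ = SC.ncard + SO.ncard := by
        rw [Finset.sum_add_distrib, hSCcard, hSOcard]
    _ = 2 * (BSSYT lam r k).ncard := by
        rw [hSCbij, hSObij]; ring
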